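/- arXiv:2204.00101 — 4 statements merged into one kernel-verified Lean document; each statement's English description precedes it below -/
import Mathlib

section
/- Let Δx, Δy, Δz > 0 and let Ex, Ey, Ez : ℤ³ → ℝ be arbitrary real-valued arrays (edge-centered electric field line averages). Define for all (i,j,k) ∈ ℤ³: dBx(i,j,k) = −(Ez(i,j+1,k) − Ez(i,j,k))/Δy + (Ey(i,j,k+1) − Ey(i,j,k))/Δz, dBy(i,j,k) = (Ez(i+1,j,k) − Ez(i,j,k))/Δx − (Ex(i,j,k+1) − Ex(i,j,k))/Δz, dBz(i,j,k) = −(Ey(i+1,j,k) − Ey(i,j,k))/Δx + (Ex(i,j+1,k) − Ex(i,j,k))/Δy. Then for every (i,j,k) ∈ ℤ³: (dBx(i+1,j,k) − dBx(i,j,k))/Δx + (dBy(i,j+1,k) − dBy(i,j,k))/Δy + (dBz(i,j,k+1) − dBz(i,j,k))/Δz = 0. In other words, the discrete divergence of the constrained-transport update of the magnetic field vanishes identically, so the discrete divergence of B is preserved. -/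
theorem ct_update_div_free_general
    (Δx Δy Δz : ℝ)
    (Ex Ey Ez : ℤ × ℤ × ℤ → ℝ)
    (dBx dBy dBz : ℤ × ℤ × ℤ → ℝ)
    (hdBx : ∀ i j k : ℤ, dBx (i, j, k) =
      -(Ez (i, j + 1, k) - Ez (i, j, k)) / Δy + (Ey (i, j, k + 1) - Ey (i, j, k)) / Δz)
    (hdBy : ∀ i j k : ℤ, dBy (i, j, k) =
      (Ez (i + 1, j, k) - Ez (i, j, k)) / Δx - (Ex (i, j, k + 1) - Ex (i, j, k)) / Δz)
    (hdBz : ∀ i j k : ℤ, dBz (i, j, k) =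
      -(Ey (i + 1, j, k) - Ey (i, j, k)) / Δx + (Ex (i, j + 1, k) - Ex (i, j, k)) / Δy) :
    ∀ i j k : ℤ,
      (dBx (i + 1, j, k) - dBx (i, j, k)) / Δx
      + (dBy (i, j + 1, k) - dBy (i, j, k)) / Δy
      + (dBz (i, j, k + 1) - dBz (i, j, k)) / Δz = 0 := by
  intro i j k
  simp only [hdBx, hdBy, hdBz]
  ring

/-- The discrete divergence of the constrained-transport update of the magnetic
field vanishes identically: if the face-averaged magnetic field components are
updated by the discrete curl of edge-centered electric field line averages,
then the discrete divergence of `B` is preserved. -/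
theorem ct_update_div_free
    (Δx Δy Δz : ℝ) (hΔx : 0 < Δx) (hΔy : 0 < Δy) (hΔz : 0 < Δz)
    (Ex Ey Ez : ℤ × ℤ × ℤ → ℝ)
    (dBx dBy dBz : ℤ × ℤ × ℤ → ℝ)
    (hdBx : ∀ i j k : ℤ, dBx (i, j, k) =
      -(Ez (i, j + 1, k) - Ez (i, j, k)) / Δy + (Ey (i, j, k + 1) - Ey (i, j, k)) / Δz)
    (hdBy : ∀ i j k : ℤ, dBy (i, j, k) =
      (Ez (i + 1, j, k) - Ez (i, j, k)) / Δx - (Ex (i, j, k + 1) - Ex (i, j, k)) / Δz)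
    (hdBz : ∀ i j k : ℤ, dBz (i, j, k) =
      -(Ey (i + 1, j, k) - Ey (i, j, k)) / Δx + (Ex (i, j + 1, k) - Ex (i, j, k)) / Δy) :
    ∀ i j k : ℤ,
      (dBx (i + 1, j, k) - dBx (i, j, k)) / Δx
      + (dBy (i, j + 1, k) - dBy (i, j, k)) / Δy
      + (dBz (i, j, k + 1) - dBz (i, j, k)) / Δz = 0 :=
  ct_update_div_free_general Δx Δy Δz Ex Ey Ez dBx dBy dBz hdBx hdBy hdBz
end

section
/- Let n be a natural number, Δx > 0, x₀ ∈ ℝ, and let P be a real polynomial of degree at most 2n. If for every integer m with −n ≤ m ≤ n the average of P over the interval [x₀ + (m − 1/2)Δx, x₀ + (m + 1/2)Δx] is zero, i.e. ∫_{x₀+(m−1/2)Δx}^{x₀+(m+1/2)Δx} P(ξ) dξ = 0 for all such m, then P is the zero polynomial. -/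
/-!
Let `Q` be an antiderivative of `P`, so `deg Q ≤ 2n + 1`. The cell integrals are the values of
the forward difference `Q(x + Δx) - Q(x)` at the left cell endpoints; this difference has degree
`< deg Q`, hence `≤ 2n`, and vanishes at `2n + 1` points, so it is zero. Thus `Q` is
`Δx`-periodic, and a periodic polynomial is constant, whence `P = Q' = 0`.
-/

open intervalIntegral Polynomial

namespace Polynomial

theorem exists_derivative_eq {K : Type*} [Field K] [CharZero K] (p : K[X]) :
    ∃ q : K[X], derivative q = p := by
  induction p using Polynomial.induction_on' with
  | add p q hp hq =>
    obtain ⟨P, rfl⟩ := hp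
    obtain ⟨Q, rfl⟩ := hq
    exact ⟨P + Q, derivative_add⟩
  | monomial k a =>
    refine ⟨monomial (k + 1) (a / (k + 1)), ?_⟩
    rw [derivative_monomial, Nat.add_sub_cancel]
    congr 1
    push_cast
    field_simp

variable {R : Type*} [CommRing R]

theorem natDegree_taylor_sub_le (p : R[X]) (r : R) :
    (taylor r p - p).natDegree ≤ p.natDegree - 1 := by
  obtain hp | hp := eq_or_ne p.natDegree 0
  · rw [eq_C_of_natDegree_eq_zero hp, taylor_C, sub_self, natDegree_zero]
    exact Nat.zero_le _
  obtain h | h := eq_or_ne (taylor r p - p) 0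
  · rw [h, natDegree_zero]
    exact Nat.zero_le _
  have hp0 : taylor r p ≠ 0 := by
    rw [Ne, taylor_eq_zero]; rintro rfl; exact hp natDegree_zero
  have := natDegree_lt_natDegree h <|
    degree_sub_lt_left (degree_taylor p r) hp0 (leadingCoeff_taylor r p)
  rw [natDegree_taylor] at this
  omega

theorem eq_C_of_periodic [IsDomain R] [CharZero R] {p : R[X]} {c : R} (hc : c ≠ 0)
    (h : Function.Periodic p.eval c) : p = C (p.eval 0) := by
  rw [← sub_eq_zero]
  refine eq_zero_of_infinite_isRoot _ <| Set.infinite_of_injective_forall_mem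
    (f := fun k : ℕ ↦ (k : R) * c) (fun a b hab ↦ ?_) (fun k ↦ ?_)
  · exact_mod_cast mul_right_cancel₀ hc hab
  · simpa [sub_eq_zero] using (h.nat_mul k).eq

theorem eval_taylor_sub_eq_integral (p : ℝ[X]) (h x : ℝ) :
    (taylor h p - p).eval x = ∫ t in x..x + h, (derivative p).eval t := by
  rw [eval_sub, taylor_eval, integral_eq_sub_of_hasDerivAt (fun t _ ↦ p.hasDerivAt t)
    ((derivative p).continuous.intervalIntegrable _ _)]

end Polynomial

/-- A real polynomial of degree at most `2n` whose averages vanish on `2n+1`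
consecutive cells of width `Δx` is the zero polynomial (uniqueness of the
finite-volume reconstruction polynomial). -/
theorem poly_vanishing_cell_averages_eq_zero
    (n : ℕ) (Δx x₀ : ℝ) (hΔx : 0 < Δx) (P : Polynomial ℝ)
    (hdeg : P.degree ≤ (2 * n : ℕ))
    (havg : ∀ m : ℤ, -(n : ℤ) ≤ m → m ≤ (n : ℤ) →
      (∫ ξ in (x₀ + ((m : ℝ) - 1/2) * Δx)..(x₀ + ((m : ℝ) + 1/2) * Δx),
        P.eval ξ) = 0) :
    P = 0 := by
  obtain ⟨Q, rfl⟩ := exists_derivative_eq P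
  let leftEnd (m : Finset.Icc (-(n : ℤ)) n) : ℝ := x₀ + ((m : ℝ) - 1/2) * Δx
  have hleftEnd : Function.Injective leftEnd := fun m m' h ↦ by
    have : ((m : ℤ) : ℝ) = m' := by
      simpa [leftEnd, hΔx.ne'] using h
    exact Subtype.ext (by exact_mod_cast this)
  have hdiff : taylor Δx Q - Q = 0 := by
    refine eq_zero_of_natDegree_lt_card_of_eval_eq_zero _ hleftEnd (fun ⟨m, hm⟩ ↦ ?_) ?_
    · obtain ⟨hlo, hhi⟩ := Finset.mem_Icc.mp hm
      rw [eval_taylor_sub_eq_integral, ← havg m hlo hhi]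
      congr 1
      ring
    · calc (taylor Δx Q - Q).natDegree ≤ Q.natDegree - 1 := natDegree_taylor_sub_le Q Δx
        _ = (derivative Q).natDegree := (natDegree_derivative Q).symm
        _ ≤ 2 * n := natDegree_le_of_degree_le hdeg
        _ < Fintype.card (Finset.Icc (-(n : ℤ)) n) := by
          rw [Fintype.card_coe, Int.card_Icc]; omega
  have hper : Function.Periodic Q.eval Δx := fun x ↦ by
    simpa [sub_eq_zero, taylor_eval] using congr(eval x $hdiff)
  rw [eq_C_of_periodic hΔx.ne' hper, derivative_C]
end

section
/- Let n be a natural number, Δx > 0, x₀ ∈ ℝ, and let (Q_m)_{m=−n}^{n} be arbitrary real numbers. Then there exists a unique real polynomial P of degree at most 2n such that for every integer m with −n ≤ m ≤ n, (1/Δx) ∫_{x₀+(m−1/2)Δx}^{x₀+(m+1/2)Δx} P(ξ) dξ = Q_m. -/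
/-!
Integration over `N` cells is a linear map from the `N`-dimensional space of polynomials of
degree `< N` to `ℝ^N`. By the mean value theorem for integrals, a polynomial whose integral over
each of `N` pairwise disjoint open cells vanishes has a root in every cell, hence `N` distinct
roots, so it is zero if its degree is `< N`. The map is therefore injective, hence bijective.
-/

open Function intervalIntegral Polynomial

open Set in
theorem Polynomial.eq_zero_of_integral_eq_zero_on_disjoint_Ioo {ι : Type*} [Fintype ι]
    {u v : ι → ℝ} (huv : ∀ i, u i < v i)
    (hdisj : Pairwise (Disjoint on fun i ↦ Ioo (u i) (v i))) {P : ℝ[X]}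
    (hP : P.degree < Fintype.card ι) (hint : ∀ i, ∫ x in u i..v i, P.eval x = 0) :
    P = 0 := by
  have hroot : ∀ i, ∃ c ∈ Ioo (u i) (v i), P.eval c = 0 := fun i ↦ by
    obtain ⟨c, hc, hPc⟩ := exists_eq_interval_average (huv i).ne P.continuous.continuousOn
    rw [uIoo_of_le (huv i).le] at hc
    exact ⟨c, hc, by rw [hPc, interval_average_eq, hint i, smul_zero]⟩
  choose c hc hPc using hroot
  have hc_inj : InjOn c (Finset.univ : Finset ι) := fun i _ j _ hij ↦ by
    by_contra hne
    exact disjoint_left.mp (hdisj hne) (hc i) (hij ▸ hc j)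
  exact eq_zero_of_degree_lt_of_eval_index_eq_zero _ hc_inj hP fun i _ ↦ hPc i

section CellIntegrals

variable {ι : Type*} (u v : ι → ℝ)

noncomputable def cellIntegrals : ℝ[X] →ₗ[ℝ] ι → ℝ where
  toFun P i := ∫ x in u i..v i, P.eval x
  map_add' P Q := funext fun i ↦ by
    simpa using integral_add (P.continuous.intervalIntegrable _ _)
      (Q.continuous.intervalIntegrable _ _)
  map_smul' c P := funext fun i ↦ by simp

theorem cellIntegrals_apply (P : ℝ[X]) (i : ι) :
    cellIntegrals u v P i = ∫ x in u i..v i, P.eval x := rfl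

variable {u v}

theorem existsUnique_mem_degreeLT_cellIntegrals_eq [Fintype ι] (huv : ∀ i, u i < v i)
    (hdisj : Pairwise (Disjoint on fun i ↦ Set.Ioo (u i) (v i))) (c : ι → ℝ) :
    ∃! P : ℝ[X], P ∈ degreeLT ℝ (Fintype.card ι) ∧ cellIntegrals u v P = c := by
  have eq_zero : ∀ P ∈ degreeLT ℝ (Fintype.card ι), cellIntegrals u v P = 0 → P = 0 :=
    fun P hP h0 ↦ eq_zero_of_integral_eq_zero_on_disjoint_Ioo huv hdisj (mem_degreeLT.mp hP)
      (congrFun h0)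
  set T := cellIntegrals u v ∘ₗ (degreeLT ℝ (Fintype.card ι)).subtype
  have hT : Surjective T := by
    refine (LinearMap.injective_iff_surjective_of_finrank_eq_finrank ?_).mp ?_
    · rw [(degreeLTEquiv ℝ _).finrank_eq, Module.finrank_fin_fun,
        Module.finrank_fintype_fun_eq_card]
    · exact (injective_iff_map_eq_zero T).mpr fun P hP ↦ Subtype.ext (eq_zero P P.2 hP)
  obtain ⟨P, hPc⟩ := hT c
  refine ⟨P, ⟨P.2, hPc⟩, fun Q ⟨hQ, hQc⟩ ↦ sub_eq_zero.mp <|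
    eq_zero _ (sub_mem hQ P.2) ?_⟩
  rw [map_sub, hQc]
  exact sub_eq_zero.mpr hPc.symm

end CellIntegrals

theorem pairwise_disjoint_Ioo_grid_cells (x₀ Δx : ℝ) :
    Pairwise (Disjoint on fun m : ℤ ↦
      Set.Ioo (x₀ + ((m : ℝ) - 1/2) * Δx) (x₀ + ((m : ℝ) + 1/2) * Δx)) := by
  convert Set.pairwise_disjoint_Ioo_add_zsmul (x₀ - Δx / 2) Δx using 3 with m
  simp only [zsmul_eq_mul, Int.cast_add, Int.cast_one]
  congr 1 <;> ring

/-- Existence and uniqueness of the finite-volume reconstruction polynomial: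
given arbitrary prescribed cell averages `Q m` on the `2n+1` consecutive cells
of width `Δx` centered at `x₀`, there is a unique real polynomial of degree at
most `2n` whose cell averages coincide with the data. -/
theorem existsUnique_reconstruction_polynomial
    (n : ℕ) (Δx x₀ : ℝ) (hΔx : 0 < Δx) (Q : ℤ → ℝ) :
    ∃! P : Polynomial ℝ, P.degree ≤ (2 * n : ℕ) ∧
      ∀ m : ℤ, -(n : ℤ) ≤ m → m ≤ (n : ℤ) →
        (1 / Δx) * (∫ ξ in (x₀ + ((m : ℝ) - 1/2) * Δx)..(x₀ + ((m : ℝ) + 1/2) * Δx),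
          P.eval ξ) = Q m := by
  let ι := Finset.Icc (-(n : ℤ)) n
  have hcard : Fintype.card ι = 2 * n + 1 := by
    rw [Fintype.card_coe, Int.card_Icc]; omega
  have h := existsUnique_mem_degreeLT_cellIntegrals_eq
    (u := fun m : ι ↦ x₀ + ((m : ℝ) - 1/2) * Δx)
    (v := fun m : ι ↦ x₀ + ((m : ℝ) + 1/2) * Δx)
    (fun m ↦ by linarith) ((pairwise_disjoint_Ioo_grid_cells x₀ Δx).comp_of_injective
      Subtype.coe_injective) (fun m ↦ Q m * Δx)
  rw [hcard, degreeLT_succ_eq_degreeLE] at h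
  refine (existsUnique_congr fun P ↦ ?_).mp h
  simp only [ι, mem_degreeLE, funext_iff, cellIntegrals_apply, Subtype.forall, Finset.mem_Icc,
    and_imp, one_div_mul_eq_div, div_eq_iff hΔx.ne']
end

section
/- Let Δx > 0, x_i ∈ ℝ. (a) Let Q_{i−2}, Q_{i−1}, Q_i be real numbers and P_L the unique polynomial of degree at most 2 with (1/Δx) ∫_{x_i+(m−1/2)Δx}^{x_i+(m+1/2)Δx} P_L(ξ) dξ = Q_{i+m} for m ∈ {−2, −1, 0}. Then ∫_{x_i−Δx/2}^{x_i+Δx/2} [Δx·(P_L′)² + Δx³·(P_L″)²] dξ = (13/12)(Q_{i−2} − 2Q_{i−1} + Q_i)² + (1/4)(Q_{i−2} − 4Q_{i−1} + 3Q_i)². (b) Let Q_i, Q_{i+1}, Q_{i+2} be real numbers and P_R the unique polynomial of degree at most 2 with the analogous average conditions for m ∈ {0, 1, 2}. Then ∫_{x_i−Δx/2}^{x_i+Δx/2} [Δx·(P_R′)² + Δx³·(P_R″)²] dξ = (13/12)(Q_i − 2Q_{i+1} + Q_{i+2})² + (1/4)(3Q_i − 4Q_{i+1} + Q_{i+2})².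 -/
open intervalIntegral Polynomial

/-!
Expand the quadratic about `x_i` and put `B = Δx P'(x_i)`, `K = Δx² P''(x_i)`. The average of `P`
over the cell centred at `x_i + sΔx` is `P(x_i) + sB + (s²/2 + 1/24)K`, and the smoothness indicator
is `B² + (13/12)K²`. On the averages, the second difference isolates `K`, while the one-sided
combinations `Q_{i−2} − 4Q_{i−1} + 3Q_i` and `3Q_i − 4Q_{i+1} + Q_{i+2}` are `2B` and `−2B`.
-/

namespace Polynomial

section CommRing

variable {R : Type*} [CommRing R] {P : R[X]}

lemma derivative_eval_eq_taylor_of_degree_le_two (hP : P.degree ≤ 2) (x₀ x : R) :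
    P.derivative.eval x = P.derivative.eval x₀ + P.derivative.derivative.eval x₀ * (x - x₀) := by
  rw [eq_quadratic_of_degree_le_two hP]
  simp only [derivative_mul, derivative_C, zero_mul, derivative_X_pow_succ,
    Nat.cast_one, map_add, map_one, pow_one, zero_add, derivative_X, mul_one, add_zero, eval_add,
    eval_mul, eval_C, eval_one, eval_X, derivative_one]
  ring

lemma derivative_derivative_eval_eq_of_degree_le_two (hP : P.degree ≤ 2) (x₀ x : R) :
    P.derivative.derivative.eval x = P.derivative.derivative.eval x₀ := by
  rw [eq_quadratic_of_degree_le_two hP]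
  simp

end CommRing

lemma eval_eq_taylor_of_degree_le_two {K : Type*} [Field K] [NeZero (2 : K)] {P : K[X]}
    (hP : P.degree ≤ 2) (x₀ x : K) :
    P.eval x = P.eval x₀ + P.derivative.eval x₀ * (x - x₀)
      + P.derivative.derivative.eval x₀ / 2 * (x - x₀) ^ 2 := by
  rw [eq_quadratic_of_degree_le_two hP]
  simp only [eval_add, eval_mul, eval_C, eval_pow, eval_X, derivative_mul,
    derivative_C, zero_mul, derivative_X_pow_succ, Nat.cast_one, map_add, map_one, pow_one,
    zero_add, derivative_X, mul_one, add_zero, eval_one, derivative_one]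
  field_simp
  ring

end Polynomial

lemma integral_quadratic_sub (x₀ a b c u v : ℝ) :
    ∫ x in u..v, (a + b * (x - x₀) + c * (x - x₀) ^ 2)
      = (a * (v - x₀) + b * (v - x₀) ^ 2 / 2 + c * (v - x₀) ^ 3 / 3)
        - (a * (u - x₀) + b * (u - x₀) ^ 2 / 2 + c * (u - x₀) ^ 3 / 3) := by
  have hderiv (x : ℝ) : HasDerivAt
      (fun x ↦ a * (x - x₀) + b * (x - x₀) ^ 2 / 2 + c * (x - x₀) ^ 3 / 3)
      (a + b * (x - x₀) + c * (x - x₀) ^ 2) x := by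
    have hsub : HasDerivAt (fun x ↦ x - x₀) 1 x := (hasDerivAt_id' x).sub_const x₀
    refine (((hsub.const_mul a).add ((hsub.pow 2).const_mul b |>.div_const 2)).add
      ((hsub.pow 3).const_mul c |>.div_const 3)).congr_deriv ?_
    norm_num
    ring
  exact integral_eq_sub_of_hasDerivAt (fun x _ ↦ hderiv x)
    ((by fun_prop : Continuous _).intervalIntegrable u v)

section CellIntegrals

variable {P : ℝ[X]} {h : ℝ}

lemma cell_average_of_degree_le_two (hP : P.degree ≤ 2) (hh : h ≠ 0) (x₀ s : ℝ) {u v : ℝ}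
    (hu : u = x₀ + (s - 1 / 2) * h) (hv : v = x₀ + (s + 1 / 2) * h) :
    (1 / h) * ∫ x in u..v, P.eval x
      = P.eval x₀ + s * (h * P.derivative.eval x₀)
        + (s ^ 2 / 2 + 1 / 24) * (h ^ 2 * P.derivative.derivative.eval x₀) := by
  rw [funext (eval_eq_taylor_of_degree_le_two hP x₀), integral_quadratic_sub, hu, hv]
  field_simp
  ring

/-- `13/12 = 1/12 + 1`, where `h³/12 = ∫ (x - x₀)²` over the cell. -/
lemma smoothness_indicator_of_degree_le_two (hP : P.degree ≤ 2) (x₀ : ℝ) :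
    ∫ x in (x₀ - h / 2)..(x₀ + h / 2),
        (h * (P.derivative.eval x) ^ 2 + h ^ 3 * (P.derivative.derivative.eval x) ^ 2)
      = (h * P.derivative.eval x₀) ^ 2
        + 13 / 12 * (h ^ 2 * P.derivative.derivative.eval x₀) ^ 2 := by
  have hintegrand (x : ℝ) :
      h * (P.derivative.eval x) ^ 2 + h ^ 3 * (P.derivative.derivative.eval x) ^ 2
        = (h * P.derivative.eval x₀ ^ 2 + h ^ 3 * P.derivative.derivative.eval x₀ ^ 2)
          + 2 * h * P.derivative.eval x₀ * P.derivative.derivative.eval x₀ * (x - x₀)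
          + h * P.derivative.derivative.eval x₀ ^ 2 * (x - x₀) ^ 2 := by
    rw [derivative_eval_eq_taylor_of_degree_le_two hP x₀,
      derivative_derivative_eval_eq_of_degree_le_two hP x₀ x]
    ring
  rw [funext hintegrand, integral_quadratic_sub]
  ring

end CellIntegrals

/-- Closed form of the CWENO smoothness indicators for the left and right
sub-stencils: with `P_L` (resp. `P_R`) the quadratic whose cell averages over
the three cells of width `Δx` centered at `x_i − 2Δx, x_i − Δx, x_i`
(resp. `x_i, x_i + Δx, x_i + 2Δx`) are `Q_{i−2}, Q_{i−1}, Q_i`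
(resp. `Q_i, Q_{i+1}, Q_{i+2}`), one has
`IS_L = (13/12)(Q_{i−2} − 2Q_{i−1} + Q_i)² + (1/4)(Q_{i−2} − 4Q_{i−1} + 3Q_i)²`
and
`IS_R = (13/12)(Q_i − 2Q_{i+1} + Q_{i+2})² + (1/4)(3Q_i − 4Q_{i+1} + Q_{i+2})²`. -/
theorem cweno_left_right_smoothness_indicators
    (Δx xi : ℝ) (hΔx : 0 < Δx)
    (Qmm Qm Qc Qp Qpp : ℝ) (PL PR : Polynomial ℝ)
    (hLdeg : PL.degree ≤ 2)
    (hLmm : (1 / Δx) * (∫ ξ in (xi - 5 * Δx / 2)..(xi - 3 * Δx / 2), PL.eval ξ) = Qmm)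
    (hLm : (1 / Δx) * (∫ ξ in (xi - 3 * Δx / 2)..(xi - Δx / 2), PL.eval ξ) = Qm)
    (hLc : (1 / Δx) * (∫ ξ in (xi - Δx / 2)..(xi + Δx / 2), PL.eval ξ) = Qc)
    (hRdeg : PR.degree ≤ 2)
    (hRc : (1 / Δx) * (∫ ξ in (xi - Δx / 2)..(xi + Δx / 2), PR.eval ξ) = Qc)
    (hRp : (1 / Δx) * (∫ ξ in (xi + Δx / 2)..(xi + 3 * Δx / 2), PR.eval ξ) = Qp)
    (hRpp : (1 / Δx) * (∫ ξ in (xi + 3 * Δx / 2)..(xi + 5 * Δx / 2), PR.eval ξ) = Qpp) :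
    (∫ ξ in (xi - Δx / 2)..(xi + Δx / 2),
        (Δx * (PL.derivative.eval ξ) ^ 2
          + Δx ^ 3 * (PL.derivative.derivative.eval ξ) ^ 2))
      = 13 / 12 * (Qmm - 2 * Qm + Qc) ^ 2 + 1 / 4 * (Qmm - 4 * Qm + 3 * Qc) ^ 2 ∧
    (∫ ξ in (xi - Δx / 2)..(xi + Δx / 2),
        (Δx * (PR.derivative.eval ξ) ^ 2
          + Δx ^ 3 * (PR.derivative.derivative.eval ξ) ^ 2))
      = 13 / 12 * (Qc - 2 * Qp + Qpp) ^ 2 + 1 / 4 * (3 * Qc - 4 * Qp + Qpp) ^ 2 := by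
  have hΔx₀ := hΔx.ne'
  constructor
  · rw [cell_average_of_degree_le_two hLdeg hΔx₀ xi (-2) (by ring) (by ring)] at hLmm
    rw [cell_average_of_degree_le_two hLdeg hΔx₀ xi (-1) (by ring) (by ring)] at hLm
    rw [cell_average_of_degree_le_two hLdeg hΔx₀ xi 0 (by ring) (by ring)] at hLc
    rw [smoothness_indicator_of_degree_le_two hLdeg, ← hLmm, ← hLm, ← hLc]
    ring
  · rw [cell_average_of_degree_le_two hRdeg hΔx₀ xi 0 (by ring) (by ring)] at hRc
    rw [cell_average_of_degree_le_two hRdeg hΔx₀ xi 1 (by ring) (by ring)] at hRp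
    rw [cell_average_of_degree_le_two hRdeg hΔx₀ xi 2 (by ring) (by ring)] at hRpp
    rw [smoothness_indicator_of_degree_le_two hRdeg, ← hRc, ← hRp, ← hRpp]
    ring
end
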